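/- arXiv:2403.08090 — 3 statements merged into one kernel-verified Lean document; each statement's English description precedes it below -/
import Mathlib

section
/- The real Lie algebra of holomorphic vector fields on ℂ generated by ∂ (i.e., the constant field 1·∂) and i z³ ∂ contains z^α ∂ and i z^α ∂ for every nonnegative integer α. -/
/-- Lie bracket of holomorphic vector fields `f∂`, `g∂` on ℂ: `(f g' - g f')∂`. -/
noncomputable def cBracket (f g : ℂ → ℂ) : ℂ → ℂ :=
  fun z => f z * deriv g z - g z * deriv f z

lemma brk (a b : ℂ) (m n : ℕ) :
    cBracket (fun z => a * z ^ m) (fun z => b * z ^ n)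
      = fun z => a * b * ((n : ℂ) - (m : ℂ)) * z ^ (m + n - 1) := by
  funext z
  have dm : deriv (fun z : ℂ => a * z ^ m) z = a * (m * z ^ (m - 1)) := by
    simp [deriv_const_mul, deriv_pow]
  have dn : deriv (fun z : ℂ => b * z ^ n) z = b * (n * z ^ (n - 1)) := by
    simp [deriv_const_mul, deriv_pow]
  simp only [cBracket, dm, dn]
  rcases m with _ | j <;> rcases n with _ | k
  · simp
  · simp only [Nat.succ_sub_one, Nat.zero_add, Nat.cast_zero, pow_zero]
    push_cast; ring
  · simp only [Nat.succ_sub_one, Nat.add_zero, Nat.cast_zero, pow_zero]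
    push_cast; ring
  · have h1 : j + 1 + (k + 1) - 1 = (j + 1) + k := by omega
    simp only [Nat.succ_sub_one, h1]
    push_cast
    rw [pow_add, pow_add, pow_succ]
    ring

lemma mem_of_smul_eq {V : Submodule ℝ (ℂ → ℂ)} {f g : ℂ → ℂ} (r : ℝ)
    (hf : f ∈ V) (h : g = r • f) : g ∈ V := h ▸ V.smul_mem r hf

lemma smul_fun_eq (r : ℝ) (f : ℂ → ℂ) : r • f = fun z => (r : ℂ) * f z := by
  funext z; simp [Complex.real_smul]

/-- Any real subspace of holomorphic vector fields on ℂ containing `∂` (the constant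
field `1`) and `i z³ ∂`, and closed under the Lie bracket, contains `z^α ∂` and
`i z^α ∂` for every nonnegative integer `α`.  In other words, the real Lie algebra
generated by `∂` and `i z³ ∂` contains all these fields. -/
theorem complex_cubic_generates :
    ∀ V : Submodule ℝ (ℂ → ℂ),
      (fun _ : ℂ => (1 : ℂ)) ∈ V →
      (fun z : ℂ => Complex.I * z ^ 3) ∈ V →
      (∀ f g : ℂ → ℂ, f ∈ V → g ∈ V → cBracket f g ∈ V) →
      ∀ α : ℕ, (fun z : ℂ => z ^ α) ∈ V ∧ (fun z : ℂ => Complex.I * z ^ α) ∈ V := by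
  intro V h1 hI3 hbr
  set I := Complex.I
  -- normalize to the `a * z ^ m` form
  have e0 : (fun z : ℂ => (1 : ℂ) * z ^ 0) ∈ V := by
    have : (fun _ : ℂ => (1 : ℂ)) = (fun z : ℂ => (1 : ℂ) * z ^ 0) := by funext z; simp
    exact this ▸ h1
  have f3 : (fun z : ℂ => I * z ^ 3) ∈ V := hI3
  -- [e0, f3] = 3 i z^2
  have f2 : (fun z : ℂ => I * z ^ 2) ∈ V := by
    refine mem_of_smul_eq (3⁻¹ : ℝ) (hbr _ _ e0 f3) ?_
    rw [brk, smul_fun_eq]; funext z; push_cast; field_simp; ring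
  have f1 : (fun z : ℂ => I * z ^ 1) ∈ V := by
    refine mem_of_smul_eq (2⁻¹ : ℝ) (hbr _ _ e0 f2) ?_
    rw [brk, smul_fun_eq]; funext z; push_cast; field_simp; ring
  have f0 : (fun z : ℂ => I * z ^ 0) ∈ V := by
    refine mem_of_smul_eq (1 : ℝ) (hbr _ _ e0 f1) ?_
    rw [brk, smul_fun_eq]; funext z; push_cast; ring
  -- [f0, f3] = i·i·3 z^2 = -3 z^2
  have e2 : (fun z : ℂ => (1 : ℂ) * z ^ 2) ∈ V := by
    refine mem_of_smul_eq (-3⁻¹ : ℝ) (hbr _ _ f0 f3) ?_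
    rw [brk, smul_fun_eq]; funext z; push_cast
    rw [Complex.I_mul_I]; ring
  have e1 : (fun z : ℂ => (1 : ℂ) * z ^ 1) ∈ V := by
    refine mem_of_smul_eq (-2⁻¹ : ℝ) (hbr _ _ f0 f2) ?_
    rw [brk, smul_fun_eq]; funext z; push_cast
    rw [Complex.I_mul_I]; ring
  -- [f1, f3] = i·i·2 z^3 = -2 z^3
  have e3 : (fun z : ℂ => (1 : ℂ) * z ^ 3) ∈ V := by
    refine mem_of_smul_eq (-2⁻¹ : ℝ) (hbr _ _ f1 f3) ?_
    rw [brk, smul_fun_eq]; funext z; push_cast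
    rw [Complex.I_mul_I]; ring
  -- inductive step from α ≥ 3 using bracket with z²
  have key : ∀ α : ℕ, 3 ≤ α →
      (fun z : ℂ => (1 : ℂ) * z ^ α) ∈ V ∧ (fun z : ℂ => I * z ^ α) ∈ V := by
    intro α hα
    induction α, hα using Nat.le_induction with
    | base => exact ⟨e3, f3⟩
    | succ n hn ih =>
      obtain ⟨he, hf⟩ := ih
      have hne : ((n : ℂ) - 2) ≠ 0 := by
        have : (2 : ℝ) < (n : ℝ) := by exact_mod_cast (by omega : 2 < n)
        intro h
        have : ((n : ℝ) - 2 : ℝ) = 0 := by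
          exact_mod_cast (by push_cast; exact h : ((n : ℝ) - 2 : ℂ) = 0)
        linarith
      have hexp : 2 + n - 1 = n + 1 := by omega
      constructor
      · refine mem_of_smul_eq (((n : ℝ) - 2)⁻¹) (hbr _ _ e2 he) ?_
        rw [brk, smul_fun_eq]; funext z; rw [hexp]; push_cast
        field_simp
      · refine mem_of_smul_eq (((n : ℝ) - 2)⁻¹) (hbr _ _ e2 hf) ?_
        rw [brk, smul_fun_eq]; funext z; rw [hexp]; push_cast
        field_simp
  intro α
  have conv : ∀ β : ℕ, (fun z : ℂ => (1 : ℂ) * z ^ β) ∈ V → (fun z : ℂ => z ^ β) ∈ V := by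
    intro β h
    have : (fun z : ℂ => (1 : ℂ) * z ^ β) = (fun z : ℂ => z ^ β) := by funext z; ring
    exact this ▸ h
  match α, (by omega : α = 0 ∨ α = 1 ∨ α = 2 ∨ 3 ≤ α) with
  | _, Or.inl rfl => exact ⟨conv 0 e0, f0⟩
  | _, Or.inr (Or.inl rfl) => exact ⟨conv 1 e1, f1⟩
  | _, Or.inr (Or.inr (Or.inl rfl)) => exact ⟨conv 2 e2, f2⟩
  | α, Or.inr (Or.inr (Or.inr h)) => exact ⟨conv α (key α h).1, (key α h).2⟩
end

section
/- The Lie algebra of polynomial vector fields on ℝ generated by the two vector fields ∂ (constant field 1) and x³∂ contains x^α ∂ for every nonnegative integer α. -/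
/-- Lie bracket of polynomial vector fields `p∂`, `q∂` on ℝ: `(p q' - q p')∂`. -/
noncomputable def polyBracket (p q : Polynomial ℝ) : Polynomial ℝ :=
  p * q.derivative - q * p.derivative

open Polynomial

lemma bracket_one_pow (n : ℕ) :
    polyBracket 1 (X ^ n : Polynomial ℝ) = (n : ℝ) • X ^ (n - 1) := by
  simp [polyBracket, derivative_X_pow, smul_eq_C_mul, mul_comm]

lemma bracket_sq_pow (n : ℕ) (hn : 1 ≤ n) :
    polyBracket (X ^ 2) (X ^ n : Polynomial ℝ) = ((n : ℝ) - 2) • X ^ (n + 1) := by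
  have h : n - 1 + 1 = n := Nat.succ_pred_eq_of_pos hn
  simp only [polyBracket, derivative_X_pow, smul_eq_C_mul]
  ring_nf
  rw [← pow_add, show 2 + (n - 1) = n + 1 by omega, pow_succ',
    show ((-2 : ℝ) + n) = (-2) + n from rfl, C_add, C_neg]
  ring

/-- Any real subspace of polynomial vector fields on ℝ containing `∂` (the constant
polynomial `1`) and `x³∂`, and closed under the Lie bracket, contains `x^α ∂` for
every nonnegative integer `α`; i.e. the Lie algebra generated by `∂` and `x³∂`
contains all `x^α ∂`. -/
theorem real_cubic_generates :
    ∀ V : Submodule ℝ (Polynomial ℝ),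
      (1 : Polynomial ℝ) ∈ V →
      (Polynomial.X ^ 3 : Polynomial ℝ) ∈ V →
      (∀ p q : Polynomial ℝ, p ∈ V → q ∈ V → polyBracket p q ∈ V) →
      ∀ α : ℕ, (Polynomial.X ^ α : Polynomial ℝ) ∈ V := by
  intro V h1 h3 hbr α
  have hsq : (X ^ 2 : Polynomial ℝ) ∈ V := by
    have := hbr 1 (X ^ 3) h1 h3
    rw [bracket_one_pow] at this
    have := V.smul_mem (3 : ℝ)⁻¹ this
    rw [smul_smul] at this
    norm_num at this
    simpa using this
  have hX : (X ^ 1 : Polynomial ℝ) ∈ V := by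
    have := hbr 1 (X ^ 2) h1 hsq
    rw [bracket_one_pow] at this
    have := V.smul_mem (2 : ℝ)⁻¹ this
    rw [smul_smul] at this
    norm_num at this
    simpa using this
  have hge : ∀ n, 3 ≤ n → (X ^ n : Polynomial ℝ) ∈ V := by
    intro n hn
    induction n, hn using Nat.le_induction with
    | base => exact h3
    | succ n hn ih =>
      have := hbr (X ^ 2) (X ^ n) hsq ih
      rw [bracket_sq_pow n (by omega)] at this
      have hne : ((n : ℝ) - 2) ≠ 0 := by
        have : (3 : ℝ) ≤ n := by exact_mod_cast hn
        linarith
      have := V.smul_mem ((n : ℝ) - 2)⁻¹ this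
      rwa [smul_smul, inv_mul_cancel₀ hne, one_smul] at this
  match α, Nat.lt_or_ge α 3 with
  | 0, _ => simpa using h1
  | 1, _ => exact hX
  | 2, _ => exact hsq
  | (n+3), _ => exact hge (n+3) (by omega)
end

section
/- Let d ≥ 3 and let Y = ‖x‖² Σ_{k=1}^d x^k ∂_{k+1} (indices mod d) be a vector field on ℝ^d. Then for each j, the triple iterated bracket satisfies [∂_j, [∂_j, [∂_j, Y]]] = 6 ∂_{j+1}. -/
/-! Since `∂_j` is constant, bracketing with it is differentiation in the `j`-th coordinate.
Differentiating `‖x‖² x^{σ k}` three times in `x_j` only sees its `x_j³` part, so for any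
index map `σ` it leaves `6 δ_{σ k, j}`; for `σ k = k - 1` this is `6 ∂_{j+1}`. -/

/-- Lie bracket of vector fields on ℝ^m: `[X,Y](x) = DY_x(X(x)) - DX_x(Y(x))`. -/
noncomputable def vfBracket {m : ℕ} (X Y : (Fin m → ℝ) → (Fin m → ℝ)) :
    (Fin m → ℝ) → (Fin m → ℝ) :=
  fun x => fderiv ℝ Y x (X x) - fderiv ℝ X x (Y x)

/-- The `j`-th coordinate constant vector field `∂_j` on ℝ^m. -/
def coordField {m : ℕ} (j : Fin m) : (Fin m → ℝ) → (Fin m → ℝ) :=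
  fun _ k => if k = j then 1 else 0

open ContinuousLinearMap

section
variable {m : ℕ}

theorem vfBracket_coordField_left (j : Fin m) (Z : (Fin m → ℝ) → Fin m → ℝ) :
    vfBracket (coordField j) Z = fun x => fderiv ℝ Z x (Pi.single j 1) := by
  have hconst : coordField j = fun _ => Pi.single j 1 := by
    funext x k
    simp [coordField, Pi.single_apply]
  funext x
  simp [vfBracket, hconst]

theorem vfBracket_coordField_left_apply {j : Fin m} {Z : (Fin m → ℝ) → Fin m → ℝ}
    {x : Fin m → ℝ} {L : Fin m → (Fin m → ℝ) →L[ℝ] ℝ}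
    (h : ∀ k, HasFDerivAt (fun y => Z y k) (L k) x) :
    vfBracket (coordField j) Z x = fun k => L k (Pi.single j 1) := by
  have hZ : HasFDerivAt Z (pi L) x := hasFDerivAt_pi.2 h
  simp only [vfBracket_coordField_left, hZ.fderiv]
  rfl

theorem hasFDerivAt_sum_sq (x : Fin m → ℝ) :
    HasFDerivAt (fun y : Fin m → ℝ => ∑ l, y l ^ 2)
      (∑ l, (2 * x l) • proj l : (Fin m → ℝ) →L[ℝ] ℝ) x := by
  refine HasFDerivAt.fun_sum fun l _ => ?_
  simpa using (hasFDerivAt_apply (𝕜 := ℝ) l x).pow 2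

variable (j : Fin m) (σ : Fin m → Fin m)

theorem vfBracket_coordField_sum_sq_mul :
    vfBracket (coordField j) (fun x k => (∑ l, x l ^ 2) * x (σ k)) =
      fun x k => (∑ l, x l ^ 2) * (if σ k = j then 1 else 0) + 2 * x j * x (σ k) := by
  funext x
  rw [vfBracket_coordField_left_apply fun k =>
    (hasFDerivAt_sum_sq x).fun_mul (hasFDerivAt_apply (𝕜 := ℝ) (σ k) x)]
  funext k
  simp only [add_apply, smul_apply, proj_apply, Pi.single_apply, smul_eq_mul, mul_ite, mul_one,
    mul_zero, sum_apply, Finset.sum_ite_eq', Finset.mem_univ, ↓reduceIte, add_right_inj]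
  ring

theorem vfBracket_coordField_quadratic :
    vfBracket (coordField j)
        (fun x k => (∑ l, x l ^ 2) * (if σ k = j then 1 else 0) + 2 * x j * x (σ k)) =
      fun x k => 2 * x (σ k) + 4 * x j * (if σ k = j then 1 else 0) := by
  funext x
  rw [vfBracket_coordField_left_apply fun k => ((hasFDerivAt_sum_sq x).mul_const _).fun_add
    (((hasFDerivAt_apply (𝕜 := ℝ) j x).const_mul 2).fun_mul (hasFDerivAt_apply (σ k) x))]
  funext k
  simp only [add_apply, smul_apply, sum_apply, proj_apply, Pi.single_apply, smul_eq_mul, mul_ite,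
    mul_one, mul_zero, Finset.sum_ite_eq', Finset.mem_univ, ↓reduceIte, ite_mul, one_mul, zero_mul]
  split_ifs <;> ring

theorem vfBracket_coordField_linear :
    vfBracket (coordField j) (fun x k => 2 * x (σ k) + 4 * x j * (if σ k = j then 1 else 0)) =
      fun _ k => if σ k = j then 6 else 0 := by
  funext x
  rw [vfBracket_coordField_left_apply fun k =>
    ((hasFDerivAt_apply (𝕜 := ℝ) (σ k) x).const_mul 2).fun_add
      (((hasFDerivAt_apply j x).const_mul 4).mul_const _)]
  funext k
  simp only [add_apply, smul_apply, proj_apply, Pi.single_apply, smul_eq_mul, mul_ite, mul_one,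
    mul_zero, ite_mul, one_mul, zero_mul]
  split_ifs <;> ring

end

/-- In dimension `d + 3 ≥ 3`, for the cubic vector field
`Y = ‖x‖² Σ_k x^k ∂_{k+1}` (indices mod the dimension), the triple bracket satisfies
`[∂_j, [∂_j, [∂_j, Y]]] = 6 ∂_{j+1}`. -/
theorem triple_bracket_cubic_field (d : ℕ) (j : Fin (d + 3)) :
    vfBracket (coordField j) (vfBracket (coordField j) (vfBracket (coordField j)
        (fun x k => (∑ l, x l ^ 2) * x (k - 1))))
      = fun _ k => if k = j + 1 then (6 : ℝ) else 0 := by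
  rw [vfBracket_coordField_sum_sq_mul, vfBracket_coordField_quadratic,
    vfBracket_coordField_linear]
  simp only [sub_eq_iff_eq_add]
end
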